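/- arXiv:2110.15041 — 4 statements merged into one kernel-verified Lean document; each statement's English description precedes it below -/
import Mathlib

section
/- If V is a nonzero finite-dimensional representation over a field k of the group U_n(k) of upper unitriangular matrices, with k algebraically closed (or more generally if the representation is given by unitriangular matrices in some basis), then the subspace of fixed vectors V^{U_n} is nonzero. -/
open Matrix

/-- An `n × n` matrix is unitriangular if it is upper triangular with all
diagonal entries equal to `1`. -/
def IsUnitriangular {n : ℕ} {k : Type*} [CommRing k] (A : Matrix (Fin n) (Fin n) k) : Prop :=
  (∀ i, A i i = 1) ∧ ∀ i j : Fin n, j < i → A i j = 0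

/-- If a group `G` acts on a nonzero finite-dimensional vector space `V = k^n`
through unitriangular matrices, then the subspace of fixed vectors is nonzero. -/
theorem stmt1 {k : Type*} [Field k] {n : ℕ} (hn : 0 < n) {G : Type*} [Group G]
    (ρ : G →* GL (Fin n) k)
    (hρ : ∀ g : G, IsUnitriangular ((ρ g).1 : Matrix (Fin n) (Fin n) k)) :
    ∃ v : Fin n → k, v ≠ 0 ∧ ∀ g : G, ((ρ g).1 : Matrix (Fin n) (Fin n) k).mulVec v = v := by
  set j0 : Fin n := ⟨0, hn⟩
  refine ⟨Pi.single j0 1, ?_, ?_⟩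
  · intro h
    have := congrFun h j0
    simp [Pi.single_eq_same] at this
  · intro g
    funext i
    rw [mulVec_single]
    rcases eq_or_ne i j0 with rfl | hi
    · simp [Pi.single_eq_same, (hρ g).1]
    · have h0 : j0 ≤ i := Fin.mk_le_mk.mpr (Nat.zero_le _)
      simp [Pi.single_eq_of_ne hi, (hρ g).2 i j0 (lt_of_le_of_ne h0 (Ne.symm hi))]
end

section
/- Every finitely generated torsion-free module over a Prüfer domain (e.g., a valuation ring or a Dedekind domain) is projective. -/
/-!
A finitely generated torsion-free module `M` over a domain embeds into some `Aⁿ`: a nonzero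
multiple `a • M` lies in the free span of a maximal linearly independent subset. If every finitely
generated ideal is projective, every finitely generated `M ⊆ Aⁿ` is projective, by induction on
`n`: the last coordinate maps `M` onto a finitely generated ideal, so this surjection splits and
`M ≅ K × I` with `K` embedded in `Aⁿ⁻¹`. Over a Prüfer domain the nonzero finitely generated ideals
are invertible, and invertible ideals are projective.
-/

open Function Submodule

open scoped nonZeroDivisors

theorem Ideal.projective_of_isUnit_coeIdeal {R : Type*} [CommRing R] {S : Submonoid R}
    (hS : S ≤ R⁰) {P : Type*} [CommRing P] [Algebra R P] [IsLocalization S P] {I : Ideal R}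
    (hI : IsUnit (I : FractionalIdeal S P)) : Module.Projective R I := by
  have inj : Injective (algebraMap R P) := IsLocalization.injective P hS
  have : FaithfulSMul R P := (faithfulSMul_iff_algebraMap_injective R P).mpr inj
  have hunit := hI.map (FractionalIdeal.coeSubmoduleHom S P)
  rw [FractionalIdeal.coeSubmoduleHom_apply, FractionalIdeal.coe_coeIdeal] at hunit
  have := projective_of_isUnit hunit
  exact .of_equiv (show IsLocalization.coeSubmodule P I ≃ₗ[R] I from
    (equivMapOfInjective (Algebra.linearMap R P) inj I).symm)

theorem Function.Exact.nonempty_linearEquiv_prod_of_projective {R K M P : Type*} [Ring R]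
    [AddCommGroup K] [AddCommGroup M] [AddCommGroup P] [Module R K] [Module R M] [Module R P]
    [Module.Projective R P] {f : K →ₗ[R] M} {g : M →ₗ[R] P} (h : Exact f g) (hf : Injective f)
    (hg : Surjective g) : Nonempty (M ≃ₗ[R] K × P) := by
  obtain ⟨l, hl⟩ := g.exists_rightInverse_of_surjective (LinearMap.range_eq_top.mpr hg)
  exact ⟨(h.splitSurjectiveEquiv hf ⟨l, hl⟩).1⟩

def IsSemihereditary (R : Type*) [CommRing R] : Prop :=
  ∀ I : Ideal R, I.FG → Module.Projective R I

theorem IsSemihereditary.projective_of_injective {R : Type*} [CommRing R]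
    (hR : IsSemihereditary R) {n : ℕ} {M : Type*} [AddCommGroup M] [Module R M]
    [Module.Finite R M] (f : M →ₗ[R] Fin n → R) (hf : Injective f) : Module.Projective R M := by
  induction n generalizing M with
  | zero =>
    have : Subsingleton M := hf.subsingleton
    infer_instance
  | succ n ih =>
    let g : M →ₗ[R] R := LinearMap.proj (Fin.last n) ∘ₗ f
    have : Module.Projective R (LinearMap.range g) :=
      hR _ (Module.Finite.iff_fg.mp inferInstance)
    obtain ⟨e⟩ := (LinearMap.exact_subtype_ker_map g.rangeRestrict)
      |>.nonempty_linearEquiv_prod_of_projective (subtype_injective _) g.surjective_rangeRestrict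
    have : Module.Finite R (LinearMap.ker g.rangeRestrict) :=
      .of_surjective (LinearMap.fst _ _ _ ∘ₗ e.toLinearMap)
        (Prod.fst_surjective.comp e.surjective)
    have : Module.Projective R (LinearMap.ker g.rangeRestrict) := by
      refine ih (LinearMap.funLeft R R Fin.castSucc ∘ₗ f ∘ₗ Submodule.subtype _) ?_
      rw [← LinearMap.ker_eq_bot, LinearMap.ker_eq_bot']
      intro x hx
      have hlast : f x (Fin.last n) = 0 := congrArg Subtype.val x.2
      refine Subtype.ext (hf ?_)
      ext i
      induction i using Fin.lastCases with
      | last => simpa using hlast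
      | cast i => simpa using congrFun hx i
    exact .of_equiv e.symm

theorem Module.exists_injective_linearMap_fin_pi (R M : Type*) [CommRing R] [IsDomain R]
    [AddCommGroup M] [Module R M] [Module.Finite R M] [Module.IsTorsionFree R M] :
    ∃ (n : ℕ) (f : M →ₗ[R] Fin n → R), Function.Injective f := by
  obtain ⟨s, hs, hmax⟩ := exists_maximal_linearIndepOn R (id : M → M)
  have : Finite s := hs.finite
  let N := span R (Set.range ((↑) : s → M))
  have htors : Module.IsTorsion R (M ⧸ N) := by
    rintro ⟨m⟩
    by_cases hm : m ∈ s
    · exact ⟨1, (Submodule.Quotient.mk_eq_zero N).mpr (by simpa [N] using subset_span hm)⟩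
    · obtain ⟨a, ha, ham⟩ := hmax m hm
      exact ⟨⟨a, mem_nonZeroDivisors_of_ne_zero ha⟩,
        (Submodule.Quotient.mk_eq_zero N).mpr (by simpa [N] using ham)⟩
  obtain ⟨a, ha, ha0⟩ := Submodule.annihilator_top_inter_nonZeroDivisors htors
  have haN (m : M) : a • m ∈ N :=
    (Submodule.Quotient.mk_eq_zero N).mp
      (Submodule.mem_annihilator.mp ha (Submodule.Quotient.mk m) mem_top)
  let b := (Module.Basis.span hs).reindex (Finite.equivFin s)
  refine ⟨_, b.equivFun.toLinearMap ∘ₗ (LinearMap.lsmul R M a).codRestrict N haN,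
    b.equivFun.injective.comp fun x y hxy => ?_⟩
  exact LinearMap.ker_eq_bot.mp (LinearMap.ker_lsmul (nonZeroDivisors.ne_zero ha0))
    (congrArg Subtype.val hxy)

/-- Every finitely generated torsion-free module over a Prüfer domain
(an integral domain in which every nonzero finitely generated ideal is
invertible as a fractional ideal) is projective. -/
theorem stmt3 (A : Type*) [CommRing A] [IsDomain A]
    (hPrufer : ∀ I : Ideal A, I ≠ ⊥ → I.FG →
      ∃ J : FractionalIdeal (nonZeroDivisors A) (FractionRing A),
        (I : FractionalIdeal (nonZeroDivisors A) (FractionRing A)) * J = 1)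
    (M : Type*) [AddCommGroup M] [Module A M] [Module.Finite A M]
    [NoZeroSMulDivisors A M] :
    Module.Projective A M := by
  have hA : IsSemihereditary A := by
    intro I hI
    obtain rfl | hI0 := eq_or_ne I ⊥
    · infer_instance
    obtain ⟨J, hJ⟩ := hPrufer I hI0 hI
    exact Ideal.projective_of_isUnit_coeIdeal le_rfl (.of_mul_eq_one J hJ)
  obtain ⟨n, f, hf⟩ := Module.exists_injective_linearMap_fin_pi A M
  exact hA.projective_of_injective f hf
end

section
/- Lazard's theorem: every flat module over a commutative ring is a filtered colimit of finitely generated free modules. -/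
/-!
The finite free modules `Rⁿ` equipped with a linear map to `M`, with commuting triangles as
morphisms, form a small category whose tautological diagram has colimit `M` for any module `M`:
each `m : M` is the image of `1` under `R → M, 1 ↦ m`, and every `(Rⁿ, x)` receives the object
`(R, 1 ↦ x v)` through `1 ↦ v`. Flatness makes this category filtered. Two objects map to their
direct sum, and two parallel morphisms `f, g : Rⁿ → Rᵐ` over `x : Rᵐ → M` are coequalized by a
factorization `x = y ∘ a` through some `Rᵏ` with `a ∘ (f - g) = 0`, which exists by the
equational criterion for flatness.
-/

open CategoryTheory CategoryTheory.Limits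

universe u

variable (R : Type u) [CommRing R] (M : Type u) [AddCommGroup M] [Module R M]

def piFinAddEquivProd (n m : ℕ) : (Fin (n + m) → R) ≃ₗ[R] (Fin n → R) × (Fin m → R) :=
  LinearEquiv.funCongrLeft R R finSumFinEquiv ≪≫ₗ LinearEquiv.sumArrowLequivProdArrow _ _ R R

structure FinFreeOver : Type u where
  rank : ℕ
  toModule : (Fin rank → R) →ₗ[R] M

namespace FinFreeOver

variable {R M}

@[ext]
structure Hom (i j : FinFreeOver R M) : Type u where
  toLinearMap : (Fin i.rank → R) →ₗ[R] (Fin j.rank → R)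
  comm : j.toModule ∘ₗ toLinearMap = i.toModule

instance : SmallCategory (FinFreeOver R M) where
  Hom := Hom
  id i := ⟨LinearMap.id, LinearMap.comp_id _⟩
  comp f g := ⟨g.toLinearMap ∘ₗ f.toLinearMap, by
    rw [← LinearMap.comp_assoc, g.comm, f.comm]⟩

@[simp]
lemma comp_toLinearMap {i j k : FinFreeOver R M} (f : i ⟶ j) (g : j ⟶ k) :
    (f ≫ g).toLinearMap = g.toLinearMap ∘ₗ f.toLinearMap :=
  rfl

lemma Hom.toModule_apply {i j : FinFreeOver R M} (f : i ⟶ j) (v : Fin i.rank → R) :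
    j.toModule (f.toLinearMap v) = i.toModule v :=
  LinearMap.congr_fun f.comm v

variable (R M)

def diagram : FinFreeOver R M ⥤ ModuleCat.{u} R where
  obj i := ModuleCat.of R (Fin i.rank → R)
  map f := ModuleCat.ofHom f.toLinearMap

def cocone : Cocone (diagram R M) where
  pt := ModuleCat.of R M
  ι.app i := ModuleCat.ofHom i.toModule
  ι.naturality _ _ f := by
    ext v
    exact f.toModule_apply v

variable {R M}

variable (R) in
abbrev single (m : M) : FinFreeOver R M :=
  ⟨1, LinearMap.toSpanSingleton R M m ∘ₗ LinearMap.proj 0⟩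

lemma single_toModule_one (m : M) : (single R m).toModule (1 : Fin 1 → R) = m :=
  one_smul R m

def toOfSingle (j : FinFreeOver R M) (v : Fin j.rank → R) : single R (j.toModule v) ⟶ j where
  toLinearMap := LinearMap.smulRight (LinearMap.proj 0) v
  comm := by
    ext w
    simp

def pair (i j : FinFreeOver R M) : FinFreeOver R M :=
  ⟨i.rank + j.rank,
    i.toModule.coprod j.toModule ∘ₗ (piFinAddEquivProd R i.rank j.rank).toLinearMap⟩

def inl (i j : FinFreeOver R M) : i ⟶ pair i j where
  toLinearMap := (piFinAddEquivProd R i.rank j.rank).symm.toLinearMap ∘ₗ LinearMap.inl R _ _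
  comm := by
    ext v
    simp [pair]

def inr (i j : FinFreeOver R M) : j ⟶ pair i j where
  toLinearMap := (piFinAddEquivProd R i.rank j.rank).symm.toLinearMap ∘ₗ LinearMap.inr R _ _
  comm := by
    ext v
    simp [pair]

section Colimit

variable (s : Cocone (diagram R M))

def descFun (m : M) : s.pt :=
  s.ι.app (single R m) (1 : Fin 1 → R)

lemma descFun_toModule (j : FinFreeOver R M) (v : Fin j.rank → R) :
    descFun s (j.toModule v) = s.ι.app j v := by
  have h : (toOfSingle j v).toLinearMap 1 = v := by
    simp [toOfSingle]
  exact (ConcreteCategory.congr_hom (s.w (toOfSingle j v)) (1 : Fin 1 → R)).symm.trans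
    (congrArg (s.ι.app j) h)

def descLinearMap : M →ₗ[R] s.pt where
  toFun := descFun s
  map_add' m m' := by
    let P := pair (single R m) (single R m')
    let x : Fin P.rank → R := (inl _ _).toLinearMap 1
    let y : Fin P.rank → R := (inr _ _).toLinearMap 1
    have hx : P.toModule x = m := ((inl _ _).toModule_apply 1).trans (single_toModule_one m)
    have hy : P.toModule y = m' := ((inr _ _).toModule_apply 1).trans (single_toModule_one m')
    rw [← hx, ← hy, ← map_add, descFun_toModule, descFun_toModule, descFun_toModule]
    exact map_add (ConcreteCategory.hom (s.ι.app P)) x y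
  map_smul' r m := by
    have h : (single R m).toModule (r • 1 : Fin 1 → R) = r • m := by
      rw [map_smul, single_toModule_one]
    rw [← h, descFun_toModule]
    exact map_smul (ConcreteCategory.hom (s.ι.app (single R m))) r (1 : Fin 1 → R)

end Colimit

variable (R M) in
def isColimitCocone : IsColimit (cocone R M) where
  desc s := ModuleCat.ofHom (descLinearMap s)
  fac s j := by
    ext v
    exact descFun_toModule s j v
  uniq s φ hφ := by
    ext m
    calc φ m = φ ((single R m).toModule 1) := congrArg φ (single_toModule_one m).symm
      _ = s.ι.app (single R m) (1 : Fin 1 → R) := ConcreteCategory.congr_hom (hφ (single R m)) _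

lemma exists_comp_eq_comp [Module.Flat R M] {i j : FinFreeOver R M} (f g : i ⟶ j) :
    ∃ (k : FinFreeOver R M) (h : j ⟶ k), f ≫ h = g ≫ h := by
  have hfg : j.toModule ∘ₗ (f.toLinearMap - g.toLinearMap) = 0 := by
    rw [LinearMap.comp_sub, f.comm, g.comm, sub_self]
  obtain ⟨k, a, y, hy, ha⟩ := Module.Flat.exists_factorization_of_comp_eq_zero_of_free hfg
  have haf : a ∘ₗ f.toLinearMap = a ∘ₗ g.toLinearMap := by
    rwa [← sub_eq_zero, ← LinearMap.comp_sub]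
  let e := Finsupp.linearEquivFunOnFinite R R (Fin k)
  refine ⟨⟨k, y ∘ₗ e.symm.toLinearMap⟩, ⟨e.toLinearMap ∘ₗ a, ?_⟩, ?_⟩
  · ext v
    simp [hy]
  · apply Hom.ext
    simp only [comp_toLinearMap, LinearMap.comp_assoc, haf]

instance [Module.Flat R M] : IsFiltered (FinFreeOver R M) where
  cocone_objs i j := ⟨pair i j, inl i j, inr i j, trivial⟩
  cocone_maps _ _ f g := exists_comp_eq_comp f g
  nonempty := ⟨⟨0, 0⟩⟩

end FinFreeOver

/-- Lazard's theorem: every flat module over a commutative ring is a filtered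
colimit of finitely generated free modules. -/
theorem stmt10 (R : Type u) [CommRing R] (M : Type u) [AddCommGroup M] [Module R M]
    [Module.Flat R M] :
    ∃ (J : Type u) (_ : SmallCategory J) (_ : IsFiltered J) (D : J ⥤ ModuleCat.{u} R)
      (c : Cocone D) (_ : IsColimit c),
      (∀ j : J, ∃ n : ℕ, Nonempty (D.obj j ≅ ModuleCat.of R (Fin n → R))) ∧
      Nonempty (c.pt ≅ ModuleCat.of R M) :=
  ⟨FinFreeOver R M, inferInstance, inferInstance, FinFreeOver.diagram R M,
    FinFreeOver.cocone R M, FinFreeOver.isColimitCocone R M,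
    fun j => ⟨j.rank, ⟨Iso.refl _⟩⟩, ⟨Iso.refl _⟩⟩
end

section
/- Let A be a commutative ring and suppose B is a faithfully flat A-algebra which, as an A-module, is a filtered colimit B = colim_λ H_λ^∨ of duals of finitely generated projective A-modules H_λ. If M is an A-module such that Hom_A(H_λ, M) = 0 for all λ, then M = 0. (Hovey's converse to Schäppi's theorem, affine case.) -/
universe u

/-- Hovey's converse to Schäppi's theorem, affine case.  Let `A → B` be faithfully
flat, and suppose `B`, as an `A`-module, is a filtered colimit of duals
`H_λ^∨ = Hom_A(H_λ, A)` of finitely generated projective `A`-modules `H_λ`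
(expressed via compatible maps `t λ : H_λ^∨ → B` which are jointly surjective and
have eventually vanishing kernels).  If `M` is an `A`-module with
`Hom_A(H_λ, M) = 0` for all `λ`, then `M = 0`. -/
theorem stmt19 {ι : Type u} [Preorder ι] [IsDirected ι (· ≤ ·)] [Nonempty ι]
    (A B : Type u) [CommRing A] [CommRing B] [Algebra A B] [Module.FaithfullyFlat A B]
    (H : ι → Type u) [∀ i, AddCommGroup (H i)] [∀ i, Module A (H i)]
    [∀ i, Module.Finite A (H i)] [∀ i, Module.Projective A (H i)]
    (d : ∀ i j, i ≤ j → Module.Dual A (H i) →ₗ[A] Module.Dual A (H j))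
    (t : ∀ i, Module.Dual A (H i) →ₗ[A] B)
    (hcompat : ∀ i j (h : i ≤ j), (t j).comp (d i j h) = t i)
    (hsurj : ∀ b : B, ∃ i x, t i x = b)
    (hker : ∀ i x, t i x = 0 → ∃ j, ∃ h : i ≤ j, d i j h x = 0)
    (M : Type u) [AddCommGroup M] [Module A M]
    (hM : ∀ i, ∀ f : H i →ₗ[A] M, f = 0) :
    Subsingleton M := by
  have key : ∀ z : TensorProduct A B M, z = 0 := by
    intro z
    induction z using TensorProduct.induction_on with
    | zero => rfl
    | add x y hx hy => rw [hx, hy, add_zero]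
    | tmul b m =>
      obtain ⟨i, x, rfl⟩ := hsurj b
      -- `x h • m = 0` for all `h`, since `h ↦ x h • m` is a linear map `H i → M`
      have hsm : ∀ h : H i, x h • m = 0 := by
        intro h
        have h0 := hM i ((LinearMap.toSpanSingleton A M m).comp x)
        simpa using LinearMap.congr_fun h0 h
      -- dual basis for the f.g. projective module `H i`
      obtain ⟨n, f, g, -, -, hfg⟩ :=
        Module.Finite.exists_comp_eq_id_of_projective A (H i)
      -- write `x` in terms of the dual basis
      have hx : x = ∑ k, x (f ((Pi.single k 1 : Fin n → A))) •
          ((LinearMap.proj k).comp g) := by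
        ext h
        have hh : f (g h) = h := LinearMap.congr_fun hfg h
        have hgh : g h = ∑ k, g h k • (Pi.single k 1 : Fin n → A) := by
          conv_lhs => rw [← Finset.univ_sum_single (g h)]
          refine Finset.sum_congr rfl fun k _ => ?_
          ext j
          simp [Pi.single_apply]
        calc x h = x (f (g h)) := by rw [hh]
          _ = x (f (∑ k, g h k • (Pi.single k 1 : Fin n → A))) := by rw [← hgh]
          _ = ∑ k, g h k * x (f ((Pi.single k 1 : Fin n → A))) := by
              rw [map_sum, map_sum]
              refine Finset.sum_congr rfl fun k _ => ?_
              rw [map_smul, map_smul, smul_eq_mul]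
          _ = _ := by
              simp [LinearMap.sum_apply, mul_comm]
      -- hence `x ⊗ m = 0` already in `Dual(H i) ⊗ M`
      have hxm : x ⊗ₜ[A] m = (0 : TensorProduct A (Module.Dual A (H i)) M) := by
        rw [hx, TensorProduct.sum_tmul]
        refine Finset.sum_eq_zero fun k _ => ?_
        rw [TensorProduct.smul_tmul, hsm, TensorProduct.tmul_zero]
      calc t i x ⊗ₜ[A] m = LinearMap.rTensor M (t i) (x ⊗ₜ[A] m) := rfl
        _ = 0 := by rw [hxm, map_zero]
  haveI : Subsingleton (TensorProduct A B M) := ⟨fun a b => by rw [key a, key b]⟩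
  exact Module.FaithfullyFlat.lTensor_reflects_triviality A B M
end
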